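/- Let q ≥ 2 and n ≥ 2 be natural numbers. Then q^(n²) · ∏_{i=1}^n (q^(2i) − 1) > (q² − 1)² · q^(2n² + n − 4). -/

import Mathlib

/-!
Put `x = q⁻²`. Pulling `q ^ (2 * i)` out of every factor, both sides become `q ^ (2 * n ^ 2 + n)`
times `(1 - x) ^ 2` and `∏ i ∈ Icc 1 n, (1 - x ^ i)` respectively. Splitting off the factor
`1 - x`, the Weierstrass product inequality `∏ (1 - a_i) ≥ 1 - ∑ a_i` bounds the rest below by
`1 - ∑_{i=2}^n x ^ i`, and this geometric sum is `< x² / (1 - x) ≤ x` as soon as `x ≤ 1 / 2`.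
-/

open Finset

theorem one_sub_sum_le_prod_one_sub {ι R : Type*} [CommRing R] [LinearOrder R]
    [IsStrictOrderedRing R] (s : Finset ι) {f : ι → R} (h0 : ∀ i ∈ s, 0 ≤ f i)
    (h1 : ∀ i ∈ s, f i ≤ 1) :
    1 - ∑ i ∈ s, f i ≤ ∏ i ∈ s, (1 - f i) := by
  classical
  induction s using Finset.induction_on with
  | empty => simp
  | insert a s ha ih =>
    rw [sum_insert ha, prod_insert ha]
    have hfa : 0 ≤ f a := h0 a (mem_insert_self a s)
    have hfa1 : f a ≤ 1 := h1 a (mem_insert_self a s)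
    have hsum : 0 ≤ ∑ i ∈ s, f i := sum_nonneg fun i hi => h0 i (mem_insert_of_mem hi)
    have ih := ih (fun i hi => h0 i (mem_insert_of_mem hi)) (fun i hi => h1 i (mem_insert_of_mem hi))
    calc 1 - (f a + ∑ i ∈ s, f i) ≤ (1 - f a) * (1 - ∑ i ∈ s, f i) := by nlinarith
      _ ≤ (1 - f a) * ∏ i ∈ s, (1 - f i) := mul_le_mul_of_nonneg_left ih (by linarith)

theorem sum_Icc_two_pow_lt {R : Type*} [Field R] [LinearOrder R] [IsStrictOrderedRing R]
    {x : R} (hx0 : 0 < x) (hx : x ≤ 1 / 2) (n : ℕ) :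
    ∑ i ∈ Icc 2 n, x ^ i < x := by
  rcases lt_or_ge n 2 with hn | hn
  · rw [Icc_eq_empty (by omega), sum_empty]
    exact hx0
  have hgeom := geom_sum_Ico_mul_neg x (by omega : 2 ≤ n + 1)
  rw [Ico_add_one_right_eq_Icc] at hgeom
  refine lt_of_mul_lt_mul_right ?_ (by linarith : (0 : R) ≤ 1 - x)
  rw [hgeom]
  nlinarith [pow_pos hx0 (n + 1)]

theorem sq_one_sub_lt_prod_one_sub_pow {R : Type*} [Field R] [LinearOrder R]
    [IsStrictOrderedRing R] {x : R} (hx0 : 0 < x) (hx : x ≤ 1 / 2) {n : ℕ} (hn : 2 ≤ n) :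
    (1 - x) ^ 2 < ∏ i ∈ Icc 1 n, (1 - x ^ i) := by
  have hx1 : x < 1 := by linarith
  rw [← insert_Icc_add_one_left_eq_Icc (by omega : 1 ≤ n), prod_insert (by simp), pow_one]
  have hpow0 : ∀ i ∈ Icc 2 n, 0 ≤ x ^ i := fun i _ => by positivity
  have hpow1 : ∀ i ∈ Icc 2 n, x ^ i ≤ 1 := fun i _ => pow_le_one₀ hx0.le hx1.le
  calc (1 - x) ^ 2 = (1 - x) * (1 - x) := sq _
    _ < (1 - x) * (1 - ∑ i ∈ Icc 2 n, x ^ i) :=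
        mul_lt_mul_of_pos_left (by linarith [sum_Icc_two_pow_lt hx0 hx n]) (by linarith)
    _ ≤ (1 - x) * ∏ i ∈ Icc 2 n, (1 - x ^ i) :=
        mul_le_mul_of_nonneg_left (one_sub_sum_le_prod_one_sub _ hpow0 hpow1) (by linarith)

theorem prod_Icc_pow_two_mul_sub_one {K : Type*} [Field K] {y : K} (hy : y ≠ 0) (n : ℕ) :
    ∏ i ∈ Icc 1 n, (y ^ (2 * i) - 1) =
      y ^ (n * (n + 1)) * ∏ i ∈ Icc 1 n, (1 - (y ^ 2)⁻¹ ^ i) := by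
  induction n with
  | zero => simp
  | succ n ih =>
    rw [prod_Icc_succ_top (by omega), prod_Icc_succ_top (by omega), ih]
    have hexp : y ^ ((n + 1) * (n + 1 + 1)) = y ^ (n * (n + 1)) * y ^ (2 * (n + 1)) := by
      rw [← pow_add]
      ring_nf
    rw [hexp, inv_pow, ← pow_mul]
    field_simp

/-- Lemma 3.10 (|Sp_n|): for natural numbers `q ≥ 2` and `n ≥ 2`,
`q^(n²) * ∏_{i=1}^n (q^(2i) - 1) > (q² - 1)² * q^(2n² + n - 4)`; the left-hand side is
the order of `Sp_{2n}(q) = SO_{2n+1}(q)`. -/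
theorem card_symplectic_gt (q n : ℕ) (hq : 2 ≤ q) (hn : 2 ≤ n) :
    (q ^ 2 - 1) ^ 2 * q ^ (2 * n ^ 2 + n - 4) <
      q ^ (n ^ 2) * ∏ i ∈ Finset.Icc 1 n, (q ^ (2 * i) - 1) := by
  have hq0 : (q : ℝ) ≠ 0 := by positivity
  set x : ℝ := ((q : ℝ) ^ 2)⁻¹ with hx_def
  have hx0 : 0 < x := by positivity
  have hx : x ≤ 1 / 2 := by
    have : (2 : ℝ) ≤ q := by exact_mod_cast hq
    rw [hx_def, inv_le_comm₀ (by positivity) (by norm_num)]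
    nlinarith
  have hlhs : (((q ^ 2 - 1) ^ 2 * q ^ (2 * n ^ 2 + n - 4) : ℕ) : ℝ) =
      (q : ℝ) ^ (2 * n ^ 2 + n) * (1 - x) ^ 2 := by
    have hexp : 2 * n ^ 2 + n = (2 * n ^ 2 + n - 4) + 4 := (Nat.sub_add_cancel (by nlinarith)).symm
    rw [Nat.cast_mul, Nat.cast_pow, Nat.cast_sub (Nat.one_le_pow _ _ (by omega)), hexp, pow_add,
      hx_def]
    push_cast
    field_simp
  have hrhs : ((q ^ (n ^ 2) * ∏ i ∈ Finset.Icc 1 n, (q ^ (2 * i) - 1) : ℕ) : ℝ) =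
      (q : ℝ) ^ (2 * n ^ 2 + n) * ∏ i ∈ Finset.Icc 1 n, (1 - x ^ i) := by
    rw [Nat.cast_mul, Nat.cast_prod,
      prod_congr rfl fun i _ => Nat.cast_sub (Nat.one_le_pow _ _ (by omega))]
    simp only [Nat.cast_pow, Nat.cast_one]
    rw [prod_Icc_pow_two_mul_sub_one hq0, ← mul_assoc, ← pow_add]
    congr 2
    ring
  rw [← Nat.cast_lt (α := ℝ), hlhs, hrhs]
  exact mul_lt_mul_of_pos_left (sq_one_sub_lt_prod_one_sub_pow hx0 hx hn) (by positivity)
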